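/- arXiv:1411.6174 — 4 statements merged into one kernel-verified Lean document; each statement's English description precedes it below -/
import Mathlib

section
/- On the elliptic curve E₁₂ : y² = x³ + x² + x over ℚ(i), the point P = (i, i) lies on the curve and has exact order 8; in particular 2P = (−1, i), 4P = (0, 0), and 8P = O. -/
/-!
Doubling `P = (i, i)` along the tangent lines gives `2P = (−1, i)` and `4P = (0, 0)`. The latter
has `y = 0`, so it is its own negative: `8P = O` while `4P ≠ O`, and `P` has order `2³`.
-/

open WeierstrassCurve.Affine

/-- The elliptic curve `E₁₂ : y² = x³ + x² + x`. -/
def E12 (K : Type*) [CommRing K] : WeierstrassCurve.Affine K :=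
  { a₁ := 0, a₂ := 1, a₃ := 0, a₄ := 1, a₆ := 0 }

namespace WeierstrassCurve.Affine.Point

variable {F : Type*} [Field F] [DecidableEq F] {W : WeierstrassCurve.Affine F}

lemma some_add_self_eq_some {x y x' y' : F} {h : W.Nonsingular x y} {h' : W.Nonsingular x' y'}
    (hy : y ≠ W.negY x y) (hx' : W.addX x x (W.slope x x y y) = x')
    (hy' : W.addY x x y (W.slope x x y y) = y') :
    some _ _ h + some _ _ h = some _ _ h' := by
  subst hx' hy'
  exact add_self_of_Y_ne hy

end WeierstrassCurve.Affine.Point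

namespace E12

variable {K : Type*} [Field K]

lemma equation_iff (x y : K) : (E12 K).Equation x y ↔ y ^ 2 = x ^ 3 + x ^ 2 + x := by
  rw [WeierstrassCurve.Affine.equation_iff]
  simp only [E12]
  constructor <;> intro h <;> linear_combination h

lemma Δ_eq : (E12 K).Δ = -48 := by
  simp only [WeierstrassCurve.Δ, WeierstrassCurve.b₂, WeierstrassCurve.b₄, WeierstrassCurve.b₆,
    WeierstrassCurve.b₈, E12]
  ring

-- `Δ ≠ 0`, so every affine solution is a nonsingular point.
lemma nonsingular_iff [CharZero K] (x y : K) :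
    (E12 K).Nonsingular x y ↔ y ^ 2 = x ^ 3 + x ^ 2 + x := by
  rw [← equation_iff_nonsingular_of_Δ_ne_zero (by rw [Δ_eq]; norm_num), equation_iff]

lemma negY_eq (x y : K) : (E12 K).negY x y = -y := by
  simp [E12]

variable [DecidableEq K]

lemma some_add_self_eq_some {x y x' y' ℓ : K} {h : (E12 K).Nonsingular x y}
    {h' : (E12 K).Nonsingular x' y'} (hy : 2 * y ≠ 0) (hℓ : ℓ * (2 * y) = 3 * x ^ 2 + 2 * x + 1)
    (hx' : x' = ℓ ^ 2 - 1 - 2 * x) (hy' : y' = -(ℓ * (x' - x) + y)) :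
    Point.some _ _ h + Point.some _ _ h = Point.some _ _ h' := by
  have hy_ne : y ≠ (E12 K).negY x y := by
    rw [negY_eq]; contrapose! hy; linear_combination hy
  have hslope : (E12 K).slope x x y y = ℓ := by
    rw [slope_of_Y_ne rfl hy_ne, negY_eq, div_eq_iff (by simpa [two_mul] using hy)]
    simp only [E12]
    linear_combination -hℓ
  refine Point.some_add_self_eq_some hy_ne ?_ ?_ <;> rw [hslope]
  · simp only [addX, E12]; linear_combination -hx'
  · simp only [addY, negAddY, addX, negY, E12]; linear_combination -hy' + ℓ * hx'

end E12

open scoped Classical in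
/-- On `E₁₂ : y² = x³ + x² + x` over `ℚ(i)`, the point `P = (i, i)` is a nonsingular point of
exact order 8, with `2P = (−1, i)`, `4P = (0, 0)` and `8P = O`. -/
theorem E12_point_order_eight {K : Type*} [Field K] [CharZero K]
    (i : K) (hi : i ^ 2 = -1) :
    ∃ (h1 : (E12 K).Nonsingular i i) (h2 : (E12 K).Nonsingular (-1) i)
      (h3 : (E12 K).Nonsingular 0 0),
      addOrderOf (WeierstrassCurve.Affine.Point.some _ _ h1) = 8 ∧
      (2 : ℤ) • (WeierstrassCurve.Affine.Point.some _ _ h1) = WeierstrassCurve.Affine.Point.some _ _ h2 ∧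
      (4 : ℤ) • (WeierstrassCurve.Affine.Point.some _ _ h1) = WeierstrassCurve.Affine.Point.some _ _ h3 ∧
      (8 : ℤ) • (WeierstrassCurve.Affine.Point.some _ _ h1) = 0 := by
  have h1 : (E12 K).Nonsingular i i :=
    (E12.nonsingular_iff _ _).mpr (by linear_combination (-i) * hi)
  have h2 : (E12 K).Nonsingular (-1) i := (E12.nonsingular_iff _ _).mpr (by linear_combination hi)
  have h3 : (E12 K).Nonsingular 0 0 := (E12.nonsingular_iff _ _).mpr (by ring)
  have h2i : 2 * i ≠ 0 := mul_ne_zero two_ne_zero (by rintro rfl; norm_num at hi)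
  have hP2 : Point.some _ _ h1 + Point.some _ _ h1 = Point.some _ _ h2 :=
    E12.some_add_self_eq_some (ℓ := 1 + i) h2i (by linear_combination -hi)
      (by linear_combination -hi) (by linear_combination -hi)
  have hP4 : Point.some _ _ h2 + Point.some _ _ h2 = Point.some _ _ h3 :=
    E12.some_add_self_eq_some (ℓ := -i) h2i (by linear_combination -2 * hi)
      (by linear_combination -hi) (by ring)
  have hP8 : Point.some _ _ h3 + Point.some _ _ h3 = 0 :=
    Point.add_self_of_Y_eq (by rw [E12.negY_eq, neg_zero])
  have e2 : (2 : ℤ) • Point.some _ _ h1 = Point.some _ _ h2 := by rw [two_zsmul, hP2]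
  have e4 : (4 : ℤ) • Point.some _ _ h1 = Point.some _ _ h3 := by
    rw [show (4 : ℤ) = 2 * 2 by norm_num, mul_zsmul, e2, two_zsmul, hP4]
  have e8 : (8 : ℤ) • Point.some _ _ h1 = 0 := by
    rw [show (8 : ℤ) = 2 * 4 by norm_num, mul_zsmul, e4, two_zsmul, hP8]
  refine ⟨h1, h2, h3, addOrderOf_eq_prime_pow (p := 2) (n := 2) ?_ ?_, e2, e4, e8⟩
  · rw [← natCast_zsmul]; norm_num [e4, Point.some_ne_zero h3]
  · rw [← natCast_zsmul]; norm_num [e8]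
end

section
/- Let K be a field of characteristic ≠ 2, and let A, B, a, b ∈ K satisfy B = b² − a³ − A·a. Suppose u, v ∈ K satisfy v² = u³ + Au + B and u ≠ a. Define x = (v + b)/(u − a) and y = 2u + a − x². Then y² = x⁴ − 6a·x² − 8b·x − 4A − 3a². -/
/-- The map `(u,v) ↦ ((v+b)/(u−a), 2u + a − ((v+b)/(u−a))²)` sends affine points of
`v² = u³ + Au + B` (with `B = b² − a³ − Aa`, `u ≠ a`) to the quartic model
`y² = x⁴ − 6ax² − 8bx − 4A − 3a²`. -/
theorem elliptic_to_quartic {K : Type*} [Field K] (hchar : (2 : K) ≠ 0)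
    (A B a b u v : K) (hB : B = b ^ 2 - a ^ 3 - A * a)
    (huv : v ^ 2 = u ^ 3 + A * u + B) (hua : u ≠ a)
    (x y : K) (hx : x = (v + b) / (u - a)) (hy : y = 2 * u + a - x ^ 2) :
    y ^ 2 = x ^ 4 - 6 * a * x ^ 2 - 8 * b * x - 4 * A - 3 * a ^ 2 := by
  have hd : u - a ≠ 0 := sub_ne_zero.mpr hua
  have h1 : x * (u - a) = v + b := by rw [hx]; field_simp
  have h3 : (v - b) * x = u ^ 2 + a * u + a ^ 2 + A := by
    apply mul_right_cancel₀ hd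
    calc (v - b) * x * (u - a) = (v - b) * (x * (u - a)) := by ring
    _ = (v - b) * (v + b) := by rw [h1]
    _ = v ^ 2 - b ^ 2 := by ring
    _ = (u ^ 2 + a * u + a ^ 2 + A) * (u - a) := by rw [huv, hB]; ring
  subst hy
  linear_combination (-4 * x) * h1 + (-4) * h3
end

section
/- Let K be a field of characteristic ≠ 2, and let A, a, b ∈ K. Suppose x, y ∈ K satisfy y² = x⁴ − 6a·x² − 8b·x − 4A − 3a². Define u = (x² + y − a)/2 and v = (x³ + xy − 3ax − 2b)/2. Then v² = u³ + Au + B, where B = b² − a³ − A·a. -/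
theorem eight_mul_weierstrass_sub_eq_mul_quartic_sub {R : Type*} [CommRing R]
    (A a b x y u v : R)
    (hu : 2 * u = x ^ 2 + y - a) (hv : 2 * v = x ^ 3 + x * y - 3 * a * x - 2 * b) :
    8 * (v ^ 2 - (u ^ 3 + A * u + (b ^ 2 - a ^ 3 - A * a))) =
      2 * (a - u) * (y ^ 2 - (x ^ 4 - 6 * a * x ^ 2 - 8 * b * x - 4 * A - 3 * a ^ 2)) := by
  -- `8v² = 2(2v)²` and `8u³ = (2u)³`: the coefficients factor a difference of squares and of cubes.
  linear_combination 2 * (2 * v + (x ^ 3 + x * y - 3 * a * x - 2 * b)) * hv -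
    ((2 * u) ^ 2 + 2 * u * (x ^ 2 + y - a) + (x ^ 2 + y - a) ^ 2 + 4 * A -
      (y ^ 2 - (x ^ 4 - 6 * a * x ^ 2 - 8 * b * x - 4 * A - 3 * a ^ 2))) * hu

/-- The map `(x,y) ↦ ((x² + y − a)/2, (x³ + xy − 3ax − 2b)/2)` sends affine points of the
quartic `y² = x⁴ − 6ax² − 8bx − 4A − 3a²` to the elliptic curve `v² = u³ + Au + B` with
`B = b² − a³ − Aa`. -/
theorem quartic_to_elliptic {K : Type*} [Field K] (hchar : (2 : K) ≠ 0)
    (A a b x y : K)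
    (hxy : y ^ 2 = x ^ 4 - 6 * a * x ^ 2 - 8 * b * x - 4 * A - 3 * a ^ 2)
    (u v : K) (hu : u = (x ^ 2 + y - a) / 2) (hv : v = (x ^ 3 + x * y - 3 * a * x - 2 * b) / 2) :
    v ^ 2 = u ^ 3 + A * u + (b ^ 2 - a ^ 3 - A * a) := by
  have h8 : (8 : K) ≠ 0 := by
    simpa [show (8 : K) = 2 ^ 3 by norm_num] using pow_ne_zero 3 hchar
  have key := eight_mul_weierstrass_sub_eq_mul_quartic_sub A a b x y u v
    (by rw [hu]; field_simp) (by rw [hv]; field_simp)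
  rwa [hxy, sub_self, mul_zero, mul_eq_zero, or_iff_right h8, sub_eq_zero] at key
end

section
/- Let K be a field of characteristic ≠ 2, let A, a, b ∈ K with B = b² − a³ − A·a, and let u, v ∈ K satisfy v² = u³ + Au + B and u ≠ a. Set x = (v + b)/(u − a) and y = 2u + a − x². Then (x² + y − a)/2 = u and (x³ + xy − 3ax − 2b)/2 = v. -/
section QuarticInverse

variable {R : Type*} [CommRing R] {a b u x y : R}

theorem quartic_inverse_u_numerator (hy : y = 2 * u + a - x ^ 2) :
    x ^ 2 + y - a = 2 * u := by
  rw [hy]; ring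

theorem quartic_inverse_v_numerator (hy : y = 2 * u + a - x ^ 2) :
    x ^ 3 + x * y - 3 * a * x - 2 * b = 2 * (x * (u - a) - b) := by
  rw [hy]; ring

end QuarticInverse

theorem quartic_map_left_inverse_general {K : Type*} [Field K] (hchar : (2 : K) ≠ 0)
    (a b u v : K) (hua : u ≠ a)
    (x y : K) (hx : x = (v + b) / (u - a)) (hy : y = 2 * u + a - x ^ 2) :
    (x ^ 2 + y - a) / 2 = u ∧ (x ^ 3 + x * y - 3 * a * x - 2 * b) / 2 = v := by
  have hxu : x * (u - a) = v + b := by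
    rw [hx]; exact div_mul_cancel₀ _ (sub_ne_zero.mpr hua)
  constructor
  · rw [quartic_inverse_u_numerator hy, mul_div_cancel_left₀ u hchar]
  · rw [quartic_inverse_v_numerator hy, hxu, add_sub_cancel_right,
      mul_div_cancel_left₀ v hchar]

/-- The map to the quartic model followed by its inverse returns the original point:
with `x = (v+b)/(u−a)` and `y = 2u + a − x²`, one has `(x² + y − a)/2 = u` and
`(x³ + xy − 3ax − 2b)/2 = v`. -/
theorem quartic_map_left_inverse {K : Type*} [Field K] (hchar : (2 : K) ≠ 0)
    (A B a b u v : K) (hB : B = b ^ 2 - a ^ 3 - A * a)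
    (huv : v ^ 2 = u ^ 3 + A * u + B) (hua : u ≠ a)
    (x y : K) (hx : x = (v + b) / (u - a)) (hy : y = 2 * u + a - x ^ 2) :
    (x ^ 2 + y - a) / 2 = u ∧ (x ^ 3 + x * y - 3 * a * x - 2 * b) / 2 = v :=
  quartic_map_left_inverse_general hchar a b u v hua x y hx hy
end
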